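/- arXiv:2009.02297 — 3 statements merged into one kernel-verified Lean document; each statement's English description precedes it below -/
import Mathlib

section
/- Consider the 1-hop-max RGCR scheme with independent cluster-level randomization at treatment probability p ∈ (0,1). For every node i, the full-neighborhood exposure probabilities satisfy P(E_i^1) ≥ p/|B_2(i)| and P(E_i^0) ≥ (1−p)/|B_2(i)|. -/
open MeasureTheory ProbabilityTheory Filter SimpleGraph Set

noncomputable section

/-- The `r`-hop ball around node `i`: all nodes at graph distance at most `r`
(using the extended graph distance, so unreachable nodes are excluded). -/
def hopBall {V : Type*} (G : SimpleGraph V) (i : V) (r : ℕ) : Set V :=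
  {j | G.edist i j ≤ r}

/-- The full-neighborhood exposure event in the 1-hop-max RGCR scheme: every node
`j` in the closed neighborhood `B₁(i)` has treatment status `b`, i.e. the cluster
center of `j` (the node `v ∈ B₁(j)` achieving the 1-hop max of `X`) has `Z v = b`. -/
def exposure {V Ω : Type*} (G : SimpleGraph V) (X : V → Ω → ℝ) (Z : V → Ω → Bool)
    (b : Bool) (i : V) : Set Ω :=
  {ω | ∀ j ∈ hopBall G i 1, ∃ v ∈ hopBall G j 1,
      (∀ u ∈ hopBall G j 1, X u ω ≤ X v ω) ∧ Z v ω = b}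

/-- The 1-hop-max RGCR model with independent cluster-level randomization:
the `X v` are i.i.d. uniform on `[0,1]`, the `Z v` are i.i.d. Bernoulli(`p`),
and the family `X` is independent of the family `Z`. -/
structure RGCRModel {V Ω : Type*} [MeasurableSpace Ω]
    (X : V → Ω → ℝ) (Z : V → Ω → Bool) (μ : Measure Ω) (p : ℝ) : Prop where
  meas_X : ∀ v, Measurable (X v)
  meas_Z : ∀ v, Measurable (Z v)
  law_X : ∀ v, μ.map (X v) = volume.restrict (Set.Icc (0:ℝ) 1)
  law_Z : ∀ v, μ {ω | Z v ω = true} = ENNReal.ofReal p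
  indep_X : iIndepFun X μ
  indep_Z : iIndepFun Z μ
  indep_XZ : IndepFun (fun ω v => X v ω) (fun ω v => Z v ω) μ


/-! If `X i` is the largest of the `X v` over `B₂(i)`, then every `j ∈ B₁(i)` has
`i ∈ B₁(j) ⊆ B₂(i)`, so `i` is the center of `j`'s cluster; if moreover `Z i = b`, all of
`B₁(i)` has status `b`. Since the `X v` are i.i.d., each node of `B₂(i)` is equally likely to
attain the maximum, so by a union bound the first event has probability at least `1/|B₂(i)|`;
it depends on `X` only and is thus independent of `Z i`. -/

open scoped ENNReal

theorem MeasureTheory.measurePreserving_comp_perm {ι α : Type*} [Fintype ι] [MeasurableSpace α]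
    (ν : Measure α) [SigmaFinite ν] (e : ι ≃ ι) :
    MeasurePreserving (fun f : ι → α => f ∘ e) (.pi fun _ => ν) (.pi fun _ => ν) :=
  measurePreserving_arrowCongr' (fun _ => ν) (fun _ => ν) e.symm (.refl α) (fun _ => .id ν)

theorem Equiv.mapsTo_swap {ι : Type*} [DecidableEq ι] {S : Set ι} {i v : ι} (hi : i ∈ S)
    (hv : v ∈ S) : MapsTo (Equiv.swap i v) S S := fun u hu => by
  rw [Equiv.swap_apply_def]
  split_ifs <;> assumption

theorem measurableSet_setOf_isMaxOn {ι : Type*} [Countable ι] (S : Set ι) (i : ι) :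
    MeasurableSet {f : ι → ℝ | IsMaxOn f S i} := by
  simp only [isMaxOn_iff, Set.ofPred_forall]
  exact .biInter S.to_countable fun u _ =>
    measurableSet_le (measurable_pi_apply u) (measurable_pi_apply i)

section IsMaxOn

variable {ι : Type*} [Fintype ι] {S : Set ι} {i : ι}

theorem pi_setOf_isMaxOn_le (ν : Measure ℝ) [SigmaFinite ν] {v : ι} (hi : i ∈ S)
    (hv : v ∈ S) :
    Measure.pi (fun _ => ν) {f | IsMaxOn f S v} ≤
      Measure.pi (fun _ => ν) {f | IsMaxOn f S i} := by
  classical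
  have hswap := measurePreserving_comp_perm ν (Equiv.swap i v)
  rw [← hswap.measure_preimage (measurableSet_setOf_isMaxOn S i).nullMeasurableSet]
  exact measure_mono fun f hf =>
    hf.comp_mapsTo (Equiv.mapsTo_swap hi hv) (Equiv.swap_apply_left i v)

theorem inv_ncard_le_pi_setOf_isMaxOn (ν : Measure ℝ) [IsProbabilityMeasure ν] (hi : i ∈ S) :
    (S.ncard : ℝ≥0∞)⁻¹ ≤ Measure.pi (fun _ => ν) {f | IsMaxOn f S i} := by
  classical
  set π := Measure.pi fun _ : ι => ν
  have hcover : univ ⊆ ⋃ v ∈ S.toFinset, {f : ι → ℝ | IsMaxOn f S v} := fun f _ => by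
    obtain ⟨v, hv, hmax⟩ := S.exists_max_image f S.toFinite ⟨i, hi⟩
    exact mem_biUnion (mem_toFinset.2 hv) (isMaxOn_iff.2 hmax)
  have hone : 1 ≤ (S.ncard : ℝ≥0∞) * π {f | IsMaxOn f S i} :=
    calc 1 = π univ := measure_univ.symm
      _ ≤ ∑ v ∈ S.toFinset, π {f | IsMaxOn f S v} :=
        (measure_mono hcover).trans (measure_biUnion_finset_le _ _)
      _ ≤ ∑ v ∈ S.toFinset, π {f | IsMaxOn f S i} :=
        Finset.sum_le_sum fun v hv => pi_setOf_isMaxOn_le ν hi (mem_toFinset.1 hv)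
      _ = (S.ncard : ℝ≥0∞) * π {f | IsMaxOn f S i} := by
        rw [Finset.sum_const, nsmul_eq_mul, ncard_eq_toFinset_card']
  exact (ENNReal.inv_le_iff_le_mul (by simp) (by simp)).2 hone

theorem ProbabilityTheory.iIndepFun.inv_ncard_le_measure_isMaxOn {Ω : Type*}
    [MeasurableSpace Ω] {μ : Measure Ω} {X : ι → Ω → ℝ} {ν : Measure ℝ}
    (hind : iIndepFun X μ) (hX : ∀ v, Measurable (X v)) (hlaw : ∀ v, μ.map (X v) = ν)
    (hi : i ∈ S) :
    (S.ncard : ℝ≥0∞)⁻¹ ≤ μ {ω | IsMaxOn (fun v => X v ω) S i} := by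
  have := hind.isProbabilityMeasure
  have : IsProbabilityMeasure ν := hlaw i ▸ Measure.isProbabilityMeasure_map (hX i).aemeasurable
  have hjoint : μ.map (fun ω v => X v ω) = Measure.pi fun _ => ν := by
    rw [hind.map_fun_eq_pi_map fun v => (hX v).aemeasurable]
    simp only [hlaw]
  calc (S.ncard : ℝ≥0∞)⁻¹ ≤ Measure.pi (fun _ => ν) {f | IsMaxOn f S i} :=
        inv_ncard_le_pi_setOf_isMaxOn ν hi
    _ = μ {ω | IsMaxOn (fun v => X v ω) S i} := by
      rw [← hjoint, Measure.map_apply (measurable_pi_lambda _ hX)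
        (measurableSet_setOf_isMaxOn S i)]
      rfl

end IsMaxOn

section HopBall

variable {V : Type*} {G : SimpleGraph V} {i j : V} {r s : ℕ}

theorem mem_hopBall_self : i ∈ hopBall G i r := by
  simp [hopBall]

theorem mem_hopBall_comm : j ∈ hopBall G i r ↔ i ∈ hopBall G j r := by
  simp only [hopBall, mem_ofPred_eq, edist_comm]

theorem hopBall_subset_hopBall_add (hj : j ∈ hopBall G i r) :
    hopBall G j s ⊆ hopBall G i (r + s) := fun u hu =>
  calc G.edist i u ≤ G.edist i j + G.edist j u := G.edist_triangle
    _ ≤ r + s := add_le_add hj hu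
    _ = (r + s : ℕ) := by push_cast; rfl

end HopBall

theorem setOf_isMaxOn_inter_subset_exposure {V Ω : Type*} (G : SimpleGraph V)
    (X : V → Ω → ℝ) (Z : V → Ω → Bool) (b : Bool) (i : V) :
    {ω | IsMaxOn (fun v => X v ω) (hopBall G i 2) i} ∩ {ω | Z i ω = b} ⊆
      exposure G X Z b i := by
  rintro ω ⟨hmax, hZ⟩ j hj
  exact ⟨i, mem_hopBall_comm.1 hj,
    fun u hu => isMaxOn_iff.1 hmax u (hopBall_subset_hopBall_add hj hu), hZ⟩

namespace RGCRModel

variable {V Ω : Type*} [MeasurableSpace Ω] {X : V → Ω → ℝ} {Z : V → Ω → Bool}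
  {μ : Measure Ω} {p : ℝ}

theorem measure_div_ncard_le_measure_exposure [Fintype V] (hmodel : RGCRModel X Z μ p)
    (G : SimpleGraph V) (b : Bool) (i : V) :
    μ {ω | Z i ω = b} / (hopBall G i 2).ncard ≤ μ (exposure G X Z b i) := by
  have hmax := hmodel.indep_X.inv_ncard_le_measure_isMaxOn hmodel.meas_X hmodel.law_X
    (mem_hopBall_self : i ∈ hopBall G i 2)
  have hindep := hmodel.indep_XZ.measure_inter_preimage_eq_mul _ _
    (measurableSet_setOf_isMaxOn (hopBall G i 2) i)
    (measurable_pi_apply i (measurableSet_singleton b))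
  calc μ {ω | Z i ω = b} / (hopBall G i 2).ncard
      = ((hopBall G i 2).ncard : ℝ≥0∞)⁻¹ * μ {ω | Z i ω = b} :=
        ENNReal.div_eq_inv_mul
    _ ≤ μ {ω | IsMaxOn (fun v => X v ω) (hopBall G i 2) i} * μ {ω | Z i ω = b} := by gcongr
    _ = μ ({ω | IsMaxOn (fun v => X v ω) (hopBall G i 2) i} ∩ {ω | Z i ω = b}) := hindep.symm
    _ ≤ μ (exposure G X Z b i) := measure_mono (setOf_isMaxOn_inter_subset_exposure G X Z b i)

theorem measure_untreated [IsProbabilityMeasure μ] (hmodel : RGCRModel X Z μ p) (hp : 0 ≤ p)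
    (v : V) : μ {ω | Z v ω = false} = ENNReal.ofReal (1 - p) := by
  have hcompl : {ω | Z v ω = false} = {ω | Z v ω = true}ᶜ := by
    ext ω
    simp
  rw [hcompl, prob_compl_eq_one_sub (s := {ω | Z v ω = true})
    (hmodel.meas_Z v (measurableSet_singleton true)), hmodel.law_Z,
    ENNReal.ofReal_sub _ hp, ENNReal.ofReal_one]

end RGCRModel

/-- Under 1-hop-max RGCR with independent cluster-level
randomization at treatment probability `p ∈ (0,1)`, for every node `i` the
full-neighborhood exposure probabilities satisfy
`P(E_i^1) ≥ p / |B₂(i)|` and `P(E_i^0) ≥ (1-p) / |B₂(i)|`. -/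
theorem exposure_prob_lower_bound
    {V Ω : Type*} [Fintype V] [MeasurableSpace Ω]
    (G : SimpleGraph V) (μ : Measure Ω) [IsProbabilityMeasure μ]
    (X : V → Ω → ℝ) (Z : V → Ω → Bool) (p : ℝ) (hp : p ∈ Set.Ioo (0:ℝ) 1)
    (hmodel : RGCRModel X Z μ p) (i : V) :
    ENNReal.ofReal (p / ((hopBall G i 2).ncard : ℝ)) ≤ μ (exposure G X Z true i) ∧
    ENNReal.ofReal ((1 - p) / ((hopBall G i 2).ncard : ℝ)) ≤ μ (exposure G X Z false i) := by
  have hn : (0 : ℝ) < (hopBall G i 2).ncard := by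
    exact_mod_cast (ncard_pos (toFinite _)).2 ⟨i, mem_hopBall_self⟩
  rw [ENNReal.ofReal_div_of_pos hn, ENNReal.ofReal_div_of_pos hn, ENNReal.ofReal_natCast,
    ← hmodel.law_Z i, ← hmodel.measure_untreated hp.1.le i]
  exact ⟨hmodel.measure_div_ncard_le_measure_exposure G true i,
    hmodel.measure_div_ncard_le_measure_exposure G false i⟩
end
end

section
/- Consider the 1-hop-max RGCR scheme with independent cluster-level randomization at treatment probability p ∈ (0,1), on a graph with maximum degree d_max and restricted growth coefficient κ. For every node i, P(E_i^1) ≥ p/((1+d_max)κ) and P(E_i^0) ≥ (1−p)/((1+d_max)κ). -/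
open MeasureTheory ProbabilityTheory Filter SimpleGraph Set

noncomputable section

open scoped ENNReal

/-! If `X i` is the largest label on `B₂(i)`, then `i` is the cluster center of every
`j ∈ B₁(i)`, because `B₁(j) ⊆ B₂(i)`; together with `Z i = b` this forces `E_i^b`. The labels
are i.i.d., so every node of `B₂(i)` is a maximizer with the same probability, and since some
node is one, that probability is at least `1 / |B₂(i)|`. The event is independent of `Z`, and
`|B₂(i)| ≤ κ |B₁(i)| ≤ κ (1 + d_max)`. -/

lemma ENNReal.ofReal_div_le_inv_natCast_mul {q c : ℝ} {n : ℕ} (hn : 0 < n) (hnc : (n : ℝ) ≤ c) :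
    ENNReal.ofReal (q / c) ≤ (n : ℝ≥0∞)⁻¹ * ENNReal.ofReal q := by
  have hc : 0 < c := lt_of_lt_of_le (by exact_mod_cast hn) hnc
  rw [ENNReal.ofReal_div_of_pos hc, ← ENNReal.div_eq_inv_mul]
  refine ENNReal.div_le_div_left ?_ _
  simpa using ENNReal.ofReal_le_ofReal hnc

namespace SimpleGraph

variable {V : Type*} (G : SimpleGraph V)

lemma mem_hopBall_self (i : V) (r : ℕ) : i ∈ hopBall G i r := by
  simp [hopBall]

lemma mem_hopBall_comm {i j : V} {r : ℕ} : j ∈ hopBall G i r ↔ i ∈ hopBall G j r := by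
  simp only [hopBall, Set.mem_ofPred_eq, edist_comm]

lemma hopBall_subset_hopBall_add {i j : V} {r : ℕ} (hj : j ∈ hopBall G i r) (s : ℕ) :
    hopBall G j s ⊆ hopBall G i (r + s) := fun _ hu =>
  calc G.edist i _ ≤ G.edist i j + G.edist j _ := G.edist_triangle
    _ ≤ r + s := add_le_add hj hu
    _ = (r + s : ℕ) := by norm_cast

lemma hopBall_one (i : V) : hopBall G i 1 = insert i (G.neighborSet i) := by
  ext j
  simp only [hopBall, Set.mem_ofPred_eq, Nat.cast_one, edist_le_one_iff_adj_or_eq,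
    Set.mem_insert_iff, mem_neighborSet]
  tauto

variable [Fintype V] [DecidableRel G.Adj]

lemma ncard_hopBall_one_le (i : V) : (hopBall G i 1).ncard ≤ G.maxDegree + 1 := by
  rw [hopBall_one]
  calc (insert i (G.neighborSet i)).ncard ≤ (G.neighborSet i).ncard + 1 :=
        Set.ncard_insert_le _ _
    _ = G.degree i + 1 := by
        rw [Set.ncard_eq_toFinset_card', Set.toFinset_card, card_neighborSet_eq_degree]
    _ ≤ G.maxDegree + 1 := by grw [G.degree_le_maxDegree i]

lemma ncard_hopBall_two_le_of_growth (i : V) {κ : ℝ}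
    (hκ : ((hopBall G i 2).ncard : ℝ) ≤ κ * (hopBall G i 1).ncard) :
    ((hopBall G i 2).ncard : ℝ) ≤ (1 + G.maxDegree) * κ := by
  have hball : ((hopBall G i 1).ncard : ℝ) ≤ 1 + G.maxDegree := by
    rw [add_comm]; exact_mod_cast G.ncard_hopBall_one_le i
  have hpos : (0 : ℝ) < (hopBall G i 2).ncard := by
    exact_mod_cast (Set.ncard_pos (Set.toFinite _)).2 ⟨i, G.mem_hopBall_self i 2⟩
  have hκ0 : 0 ≤ κ := by
    by_contra! h
    nlinarith [(hopBall G i 1).ncard.cast_nonneg (α := ℝ)]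
  nlinarith

end SimpleGraph

lemma measurableSet_isMaxOn {ι : Type*} [Countable ι] (S : Set ι) (v : ι) :
    MeasurableSet {x : ι → ℝ | IsMaxOn x S v} := by
  simp only [isMaxOn_iff, Set.ofPred_forall]
  exact .iInter fun u => .iInter fun _ =>
    measurableSet_le (measurable_pi_apply u) (measurable_pi_apply v)

namespace ProbabilityTheory

variable {ι Ω : Type*} [Countable ι] [MeasurableSpace Ω] {μ : Measure Ω} {X : ι → Ω → ℝ}

lemma iIndepFun.identDistrib_comp_perm (hX : iIndepFun X μ)
    (hid : ∀ v w, IdentDistrib (X v) (X w) μ μ) (σ : Equiv.Perm ι) :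
    IdentDistrib (fun ω v => X (σ v) ω) (fun ω v => X v ω) μ μ :=
  .pi (fun v => hid (σ v) v) (hX.precomp σ.injective) hX

lemma iIndepFun.measure_isMaxOn_eq (hX : iIndepFun X μ)
    (hid : ∀ v w, IdentDistrib (X v) (X w) μ μ) {S : Set ι} {v w : ι} (hv : v ∈ S)
    (hw : w ∈ S) :
    μ {ω | IsMaxOn (X · ω) S v} = μ {ω | IsMaxOn (X · ω) S w} := by
  classical
  set σ := Equiv.swap v w
  have hσS : ∀ u, σ u ∈ S ↔ u ∈ S := by
    intro u
    simp only [σ, Equiv.swap_apply_def]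
    split_ifs <;> simp_all
  have hset : {ω | IsMaxOn (X · ω) S v} =
      (fun ω u => X (σ u) ω) ⁻¹' {x | IsMaxOn x S w} := by
    ext ω
    simp only [isMaxOn_iff, Set.mem_ofPred_eq, Set.mem_preimage, σ, Equiv.swap_apply_right]
    exact ⟨fun h u hu => h (σ u) ((hσS u).2 hu),
      fun h u hu => by simpa [σ] using h (σ u) ((hσS u).2 hu)⟩
  rw [hset, (hX.identDistrib_comp_perm hid σ).measure_mem_eq (measurableSet_isMaxOn S w)]
  rfl

lemma iIndepFun.inv_ncard_le_measure_isMaxOn_s1 [IsProbabilityMeasure μ]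
    (hX : iIndepFun X μ) (hid : ∀ v w, IdentDistrib (X v) (X w) μ μ) {S : Set ι}
    (hS : S.Finite) {i : ι} (hi : i ∈ S) :
    (S.ncard : ℝ≥0∞)⁻¹ ≤ μ {ω | IsMaxOn (X · ω) S i} := by
  have hcover : Set.univ ⊆ ⋃ v ∈ hS.toFinset, {ω | IsMaxOn (X · ω) S v} := by
    intro ω _
    obtain ⟨v, hv, hmax⟩ := Set.exists_max_image S (X · ω) hS ⟨i, hi⟩
    exact Set.mem_biUnion (hS.mem_toFinset.2 hv) (isMaxOn_iff.2 hmax)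
  have hsum : 1 ≤ (S.ncard : ℝ≥0∞) * μ {ω | IsMaxOn (X · ω) S i} :=
    calc 1 = μ Set.univ := measure_univ.symm
      _ ≤ ∑ v ∈ hS.toFinset, μ {ω | IsMaxOn (X · ω) S v} :=
        (measure_mono hcover).trans (measure_biUnion_finset_le _ _)
      _ = ∑ v ∈ hS.toFinset, μ {ω | IsMaxOn (X · ω) S i} :=
        Finset.sum_congr rfl fun v hv => hX.measure_isMaxOn_eq hid (hS.mem_toFinset.1 hv) hi
      _ = (S.ncard : ℝ≥0∞) * μ {ω | IsMaxOn (X · ω) S i} := by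
        rw [Finset.sum_const, nsmul_eq_mul, Set.ncard_eq_toFinset_card S hS]
  have hcard : S.ncard ≠ 0 := ((Set.ncard_pos hS).2 ⟨i, hi⟩).ne'
  exact (ENNReal.inv_le_iff_le_mul (fun _ => by simpa using hcard) (by simp)).2 hsum

end ProbabilityTheory

lemma mem_exposure_of_isMaxOn {V Ω : Type*} {G : SimpleGraph V} {X : V → Ω → ℝ}
    {Z : V → Ω → Bool} {b : Bool} {i : V} {ω : Ω} (hmax : IsMaxOn (X · ω) (hopBall G i 2) i)
    (hZ : Z i ω = b) : ω ∈ exposure G X Z b i := fun _ hj =>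
  ⟨i, G.mem_hopBall_comm.1 hj,
    fun u hu => isMaxOn_iff.1 hmax u (G.hopBall_subset_hopBall_add hj 1 hu), hZ⟩

namespace RGCRModel

variable {V Ω : Type*} [MeasurableSpace Ω] {μ : Measure Ω} {X : V → Ω → ℝ}
  {Z : V → Ω → Bool} {p : ℝ}

lemma identDistrib (h : RGCRModel X Z μ p) (v w : V) : IdentDistrib (X v) (X w) μ μ :=
  ⟨(h.meas_X v).aemeasurable, (h.meas_X w).aemeasurable, by rw [h.law_X, h.law_X]⟩

lemma measure_Z_eq_false [IsProbabilityMeasure μ] (h : RGCRModel X Z μ p) (hp : 0 ≤ p)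
    (v : V) : μ {ω | Z v ω = false} = ENNReal.ofReal (1 - p) := by
  have hcompl : {ω | Z v ω = false} = {ω | Z v ω = true}ᶜ := by ext; simp
  have hmeas : MeasurableSet {ω | Z v ω = true} := h.meas_Z v (measurableSet_singleton true)
  rw [hcompl, prob_compl_eq_one_sub hmeas, h.law_Z, ENNReal.ofReal_sub _ hp, ENNReal.ofReal_one]

variable [Fintype V] [IsProbabilityMeasure μ]

lemma inv_ncard_mul_le_measure_exposure (h : RGCRModel X Z μ p) (G : SimpleGraph V)
    (b : Bool) (i : V) :
    ((hopBall G i 2).ncard : ℝ≥0∞)⁻¹ * μ {ω | Z i ω = b} ≤ μ (exposure G X Z b i) :=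
  calc ((hopBall G i 2).ncard : ℝ≥0∞)⁻¹ * μ {ω | Z i ω = b}
      ≤ μ {ω | IsMaxOn (X · ω) (hopBall G i 2) i} * μ {ω | Z i ω = b} := by
        gcongr
        exact h.indep_X.inv_ncard_le_measure_isMaxOn_s1 h.identDistrib (Set.toFinite _)
          (G.mem_hopBall_self i 2)
    _ = μ ({ω | IsMaxOn (X · ω) (hopBall G i 2) i} ∩ {ω | Z i ω = b}) :=
        (h.indep_XZ.measure_inter_preimage_eq_mul _ _ (measurableSet_isMaxOn _ i)
          (measurable_pi_apply i (measurableSet_singleton b))).symm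
    _ ≤ μ (exposure G X Z b i) := measure_mono fun _ hω => mem_exposure_of_isMaxOn hω.1 hω.2

lemma ofReal_div_le_measure_exposure (h : RGCRModel X Z μ p) (G : SimpleGraph V) {b : Bool}
    {i : V} {q c : ℝ} (hq : μ {ω | Z i ω = b} = ENNReal.ofReal q)
    (hc : ((hopBall G i 2).ncard : ℝ) ≤ c) :
    ENNReal.ofReal (q / c) ≤ μ (exposure G X Z b i) :=
  calc ENNReal.ofReal (q / c) ≤ ((hopBall G i 2).ncard : ℝ≥0∞)⁻¹ * ENNReal.ofReal q :=
        ENNReal.ofReal_div_le_inv_natCast_mul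
          ((Set.ncard_pos (Set.toFinite _)).2 ⟨i, G.mem_hopBall_self i 2⟩) hc
    _ = ((hopBall G i 2).ncard : ℝ≥0∞)⁻¹ * μ {ω | Z i ω = b} := by rw [hq]
    _ ≤ μ (exposure G X Z b i) := h.inv_ncard_mul_le_measure_exposure G b i

end RGCRModel

/-- Under 1-hop-max RGCR with independent cluster-level
randomization at treatment probability `p ∈ (0,1)`, on a graph with maximum
degree `d_max` and restricted growth coefficient `κ`, for every node `i`:
`P(E_i^1) ≥ p / ((1 + d_max) κ)` and `P(E_i^0) ≥ (1-p) / ((1 + d_max) κ)`. -/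
theorem exposure_prob_lower_bound_growth
    {V Ω : Type*} [Fintype V] [MeasurableSpace Ω]
    (G : SimpleGraph V) [DecidableRel G.Adj]
    (μ : Measure Ω) [IsProbabilityMeasure μ]
    (X : V → Ω → ℝ) (Z : V → Ω → Bool) (p : ℝ) (hp : p ∈ Set.Ioo (0:ℝ) 1)
    (hmodel : RGCRModel X Z μ p)
    (κ : ℝ)
    (hκ : ∀ (j : V) (r : ℕ), 1 ≤ r →
      ((hopBall G j (r + 1)).ncard : ℝ) ≤ κ * ((hopBall G j r).ncard : ℝ))
    (i : V) :
    ENNReal.ofReal (p / ((1 + (G.maxDegree : ℝ)) * κ)) ≤ μ (exposure G X Z true i) ∧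
    ENNReal.ofReal ((1 - p) / ((1 + (G.maxDegree : ℝ)) * κ)) ≤ μ (exposure G X Z false i) := by
  have hball := G.ncard_hopBall_two_le_of_growth i (hκ i 1 le_rfl)
  exact ⟨hmodel.ofReal_div_le_measure_exposure G (hmodel.law_Z i) hball,
    hmodel.ofReal_div_le_measure_exposure G (hmodel.measure_Z_eq_false hp.1.le i) hball⟩
end
end

section
/- Let G be a finite simple graph, π : V → ℕ an injective ranking of the vertices, and S ⊆ V a set satisfying the greedy 3-net characterization: for every node v, v ∈ S if and only if every s ∈ S with π(s) < π(v) has dist_G(s,v) > 2. Suppose node i satisfies π(i) < π(j) for every j ∈ B_2(i) with j ≠ i. Then (a) i ∈ S, and (b) for every j ∈ B_1(i) and every s ∈ S with s ≠ i, dist_G(j,s) ≥ 2 > dist_G(j,i); hence i is the strictly nearest element of S to every node of B_1(i), so in the 3-net clustering all of B_1(i) is assigned to the cluster of seed i regardless of tie-breaking. -/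
/-! A node ranked first within its `r`-hop ball is a seed of the greedy `r`-separated net, since
no earlier-ranked seed is close enough to block it; and every other seed lies outside that
ball, since it is ranked after `i` and so must be `r`-far from the seed `i`. For `r = 2`, the
triangle inequality then puts every other seed at distance at least `2` from each neighbour
of `i`. -/

open SimpleGraph Set

noncomputable section

def IsGreedyNet {V : Type*} (G : SimpleGraph V) (π : V → ℕ) (r : ℕ) (S : Set V) : Prop :=
  ∀ v, v ∈ S ↔ ∀ s ∈ S, π s < π v → r < G.edist s v

namespace IsGreedyNet

variable {V : Type*} {G : SimpleGraph V} {π : V → ℕ} {r : ℕ} {S : Set V} {i s : V}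

theorem mem_of_rank_lt_on_hopBall (hS : IsGreedyNet G π r S)
    (hi : ∀ j ∈ hopBall G i r, j ≠ i → π i < π j) : i ∈ S := by
  refine (hS i).mpr fun s _ hlt => ?_
  by_contra! hsi
  have hs : s ∈ hopBall G i r := edist_comm.trans_le hsi
  have hne : s ≠ i := by rintro rfl; exact lt_irrefl _ hlt
  exact (hi s hs hne).not_gt hlt

theorem lt_edist_of_rank_lt_on_hopBall (hS : IsGreedyNet G π r S)
    (hi : ∀ j ∈ hopBall G i r, j ≠ i → π i < π j) (hs : s ∈ S) (hsi : s ≠ i) :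
    r < G.edist i s := by
  by_contra! his
  exact his.not_gt <| (hS s).mp hs i (hS.mem_of_rank_lt_on_hopBall hi) (hi s his hsi)

end IsGreedyNet

theorem three_net_first_ranked_is_seed_general
    {V : Type*} (G : SimpleGraph V)
    (π : V → ℕ)
    (S : Set V)
    (hS : ∀ v, v ∈ S ↔ ∀ s ∈ S, π s < π v → 2 < G.edist s v)
    (i : V) (hi : ∀ j ∈ hopBall G i 2, j ≠ i → π i < π j) :
    i ∈ S ∧
      ∀ j ∈ hopBall G i 1, ∀ s ∈ S, s ≠ i → 2 ≤ G.edist j s ∧ G.edist j i < 2 := by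
  have hnet : IsGreedyNet G π 2 S := hS
  refine ⟨hnet.mem_of_rank_lt_on_hopBall hi, fun j (hij : G.edist i j ≤ 1) s hs hsi => ⟨?_, ?_⟩⟩
  · by_contra! hjs
    have his : G.edist i s ≤ 2 :=
      calc G.edist i s ≤ G.edist i j + G.edist j s := G.edist_triangle
        _ ≤ 1 + 1 := add_le_add hij (Order.le_of_lt_succ hjs)
        _ = 2 := by norm_num
    exact his.not_gt (hnet.lt_edist_of_rank_lt_on_hopBall hi hs hsi)
  · calc G.edist j i = G.edist i j := G.edist_comm
      _ ≤ 1 := hij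
      _ < 2 := by norm_num

/-- Let `π` be an injective ranking of the vertices and `S` the
greedy 3-net seed set: `v ∈ S` iff every earlier-ranked `s ∈ S` has
`dist(s, v) > 2`.  If node `i` is ranked first within `B₂(i)`, then (a) `i ∈ S`,
and (b) for every `j ∈ B₁(i)` and every seed `s ∈ S` with `s ≠ i` we have
`dist(j, s) ≥ 2 > dist(j, i)`; hence `i` is the strictly nearest seed to every
node of `B₁(i)`, so all of `B₁(i)` is assigned to the cluster of seed `i`
regardless of tie-breaking. -/
theorem three_net_first_ranked_is_seed
    {V : Type*} (G : SimpleGraph V)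
    (π : V → ℕ) (hπ : Function.Injective π)
    (S : Set V)
    (hS : ∀ v, v ∈ S ↔ ∀ s ∈ S, π s < π v → 2 < G.edist s v)
    (i : V) (hi : ∀ j ∈ hopBall G i 2, j ≠ i → π i < π j) :
    i ∈ S ∧
      ∀ j ∈ hopBall G i 1, ∀ s ∈ S, s ≠ i → 2 ≤ G.edist j s ∧ G.edist j i < 2 :=
  three_net_first_ranked_is_seed_general G π S hS i hi
end
end
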